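/- arXiv:1703.07560 — 2 statements merged into one kernel-verified Lean document; each statement's English description precedes it below -/
import Mathlib

section
/- Let V be a finite-dimensional complex vector space with a direct sum decomposition V = V₁ ⊕ V₂, and let G ⊂ GL(V) be the subgroup of block lower-triangular automorphisms g = [[I,0],[A,B]] with B ∈ GL(V₂) and A ∈ Hom(V₁,V₂). Suppose s₁,…,s_N ∈ V have decompositions sᵢ = uᵢ + vᵢ with uᵢ ∈ V₁, vᵢ ∈ V₂, such that u₁,…,u_m are linearly independent and u_{m+1} = … = u_N = 0, and suppose t₁,…,t_N ∈ V have t_i = u_i + v_i' (same V₁-components) with v'_{m+1},…,v'_N linearly independent in V₂. Then there exists g ∈ G with g(t_i) = s_i for all i, so in particular g maps the span of t₁,…,t_N onto the span of s₁,…,s_N. -/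
/-! Look for `g` of the form `[[1, 0], [A, B]]`. For `i ≥ m` the `V₁`-components vanish, so `B` alone
must send `v'ᵢ` to `vᵢ`: extend both independent families to bases of `V₂` and match the bases.
For `i < m` the `uᵢ` are independent, so `A` can be prescribed on them: `A uᵢ = vᵢ - B v'ᵢ`. -/

open Module

theorem Module.Basis.sumExtend_inl {K V ι : Type*} [DivisionRing K] [AddCommGroup V] [Module K V]
    {v : ι → V} (hv : LinearIndependent K v) (i : ι) : Basis.sumExtend hv (Sum.inl i) = v i := by
  simp only [Basis.sumExtend, Equiv.trans_def, Basis.coe_reindex, Basis.coe_extend,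
    Function.comp_apply]
  rfl

section DivisionRing

variable {K V W ι : Type*} [DivisionRing K] [AddCommGroup V] [Module K V]
  [AddCommGroup W] [Module K W] {v : ι → V}

theorem LinearIndependent.exists_linearMap_apply_eq (hv : LinearIndependent K v) (f : ι → W) :
    ∃ A : V →ₗ[K] W, ∀ i, A (v i) = f i := by
  obtain ⟨A, hA⟩ := LinearMap.exists_extend (Finsupp.linearCombination K f ∘ₗ hv.repr)
  refine ⟨A, fun i => ?_⟩
  have := LinearMap.congr_fun hA ⟨v i, Submodule.subset_span (Set.mem_range_self i)⟩
  rwa [LinearMap.comp_apply, LinearMap.comp_apply, hv.repr_eq_single i _ rfl,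
    Finsupp.linearCombination_single, one_smul] at this

theorem LinearIndependent.exists_linearEquiv_apply_eq [FiniteDimensional K V] {w : ι → V}
    (hv : LinearIndependent K v) (hw : LinearIndependent K w) :
    ∃ B : V ≃ₗ[K] V, ∀ i, B (v i) = w i := by
  -- the two extended bases have the same size, hence so do their complementary parts
  let b := Basis.sumExtend hv
  let c := Basis.sumExtend hw
  have := Module.Finite.finite_basis b
  have := Module.Finite.finite_basis c
  have : Finite ι := hv.finite
  have : Finite (Basis.sumExtendIndex hv) := .of_injective _ (Sum.inr_injective (α := ι))
  have : Finite (Basis.sumExtendIndex hw) := .of_injective _ (Sum.inr_injective (α := ι))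
  obtain ⟨e⟩ : Nonempty (Basis.sumExtendIndex hv ≃ Basis.sumExtendIndex hw) := by
    have := Nat.card_congr (b.indexEquiv c)
    rw [Nat.card_sum, Nat.card_sum] at this
    exact Finite.card_eq.mp (by omega)
  refine ⟨b.equiv c (Equiv.sumCongr (Equiv.refl ι) e), fun i => ?_⟩
  rw [← Basis.sumExtend_inl hv, Basis.equiv_apply]
  exact Basis.sumExtend_inl hw i

end DivisionRing

namespace Submodule

variable {R E : Type*} [Ring R] [AddCommGroup E] [Module R E] {p q : Submodule R E}

/-- The automorphism `[[1, 0], [A, B]]` of `E = p ⊕ q` in block form. -/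
noncomputable def blockLowerTriangular (h : IsCompl p q) (A : p →ₗ[R] q) (B : q ≃ₗ[R] q) :
    E ≃ₗ[R] E :=
  (prodEquivOfIsCompl p q h).symm.trans
    (((LinearEquiv.refl R p).skewProd B A).trans (prodEquivOfIsCompl p q h))

theorem blockLowerTriangular_apply_add (h : IsCompl p q) (A : p →ₗ[R] q) (B : q ≃ₗ[R] q)
    (x : p) (y : q) : blockLowerTriangular h A B (x + y) = x + A x + B y := by
  have : (prodEquivOfIsCompl p q h).symm (x + y) = (x, y) :=
    (LinearEquiv.symm_apply_eq _).mpr rfl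
  simp [blockLowerTriangular, this, add_assoc, add_comm (B y : E)]

theorem blockLowerTriangular_mem (h : IsCompl p q) (A : p →ₗ[R] q) (B : q ≃ₗ[R] q)
    {y : E} (hy : y ∈ q) : blockLowerTriangular h A B y ∈ q := by
  have := blockLowerTriangular_apply_add h A B 0 ⟨y, hy⟩
  simp only [ZeroMemClass.coe_zero, zero_add, map_zero] at this
  simp [this]

theorem blockLowerTriangular_sub_mem (h : IsCompl p q) (A : p →ₗ[R] q) (B : q ≃ₗ[R] q)
    {x : E} (hx : x ∈ p) : blockLowerTriangular h A B x - x ∈ q := by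
  have := blockLowerTriangular_apply_add h A B ⟨x, hx⟩ 0
  simp only [ZeroMemClass.coe_zero, add_zero, map_zero] at this
  simp [this]

end Submodule

theorem stmt_0_general (V : Type*) [AddCommGroup V] [Module ℂ V] [FiniteDimensional ℂ V]
    (V₁ V₂ : Submodule ℂ V) (hcompl : IsCompl V₁ V₂)
    (N m : ℕ)
    (s t u v v' : Fin N → V)
    (hu : ∀ i, u i ∈ V₁) (hv : ∀ i, v i ∈ V₂) (hv' : ∀ i, v' i ∈ V₂)
    (hs : ∀ i, s i = u i + v i) (ht : ∀ i, t i = u i + v' i)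
    (huli : LinearIndependent ℂ (fun i : {i : Fin N // (i : ℕ) < m} => u i))
    (hu0 : ∀ i : Fin N, m ≤ (i : ℕ) → u i = 0)
    (hvli : LinearIndependent ℂ (fun i : {i : Fin N // m ≤ (i : ℕ)} => v i))
    (hv'li : LinearIndependent ℂ (fun i : {i : Fin N // m ≤ (i : ℕ)} => v' i)) :
    ∃ g : V ≃ₗ[ℂ] V,
      (∀ x ∈ V₂, g x ∈ V₂) ∧ (∀ x ∈ V₁, g x - x ∈ V₂) ∧
      (∀ i, g (t i) = s i) ∧
      Submodule.map (g : V →ₗ[ℂ] V) (Submodule.span ℂ (Set.range t))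
        = Submodule.span ℂ (Set.range s) := by
  have hw : LinearIndependent ℂ fun i : {i : Fin N // m ≤ (i : ℕ)} => (⟨v i, hv i⟩ : V₂) :=
    .of_comp V₂.subtype hvli
  have hw' : LinearIndependent ℂ fun i : {i : Fin N // m ≤ (i : ℕ)} => (⟨v' i, hv' i⟩ : V₂) :=
    .of_comp V₂.subtype hv'li
  have hc : LinearIndependent ℂ fun i : {i : Fin N // (i : ℕ) < m} => (⟨u i, hu i⟩ : V₁) :=
    .of_comp V₁.subtype huli
  obtain ⟨B, hB⟩ := hw'.exists_linearEquiv_apply_eq hw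
  obtain ⟨A, hA⟩ := hc.exists_linearMap_apply_eq fun i => ⟨v i, hv i⟩ - B ⟨v' i, hv' i⟩
  let g := Submodule.blockLowerTriangular hcompl A B
  have hgt (i : Fin N) : g (t i) = s i := by
    rw [ht, hs, Submodule.blockLowerTriangular_apply_add hcompl A B ⟨u i, hu i⟩ ⟨v' i, hv' i⟩]
    rcases lt_or_ge (i : ℕ) m with hi | hi
    · rw [hA ⟨i, hi⟩, Submodule.coe_sub]
      abel
    · have hu0i : (⟨u i, hu i⟩ : V₁) = 0 := Subtype.ext (hu0 i hi)
      rw [hB ⟨i, hi⟩, hu0i]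
      simp only [ZeroMemClass.coe_zero, map_zero, add_zero, zero_add, hu0 i hi]
  refine ⟨g, fun x => Submodule.blockLowerTriangular_mem hcompl A B,
    fun x => Submodule.blockLowerTriangular_sub_mem hcompl A B, hgt, ?_⟩
  rw [Submodule.map_span, ← Set.range_comp]
  exact congrArg (fun f => Submodule.span ℂ (Set.range f)) (funext hgt)

/-- the key linear-algebra step in Claim `action`: a block
lower-triangular automorphism `g = [[I,0],[A,B]]` mapping `tᵢ` to `sᵢ`. -/
theorem stmt_0 (V : Type*) [AddCommGroup V] [Module ℂ V] [FiniteDimensional ℂ V]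
    (V₁ V₂ : Submodule ℂ V) (hcompl : IsCompl V₁ V₂)
    (N m : ℕ) (hm : m ≤ N)
    (s t u v v' : Fin N → V)
    (hu : ∀ i, u i ∈ V₁) (hv : ∀ i, v i ∈ V₂) (hv' : ∀ i, v' i ∈ V₂)
    (hs : ∀ i, s i = u i + v i) (ht : ∀ i, t i = u i + v' i)
    (huli : LinearIndependent ℂ (fun i : {i : Fin N // (i : ℕ) < m} => u i))
    (hu0 : ∀ i : Fin N, m ≤ (i : ℕ) → u i = 0)
    (hvli : LinearIndependent ℂ (fun i : {i : Fin N // m ≤ (i : ℕ)} => v i))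
    (hv'li : LinearIndependent ℂ (fun i : {i : Fin N // m ≤ (i : ℕ)} => v' i)) :
    ∃ g : V ≃ₗ[ℂ] V,
      (∀ x ∈ V₂, g x ∈ V₂) ∧ (∀ x ∈ V₁, g x - x ∈ V₂) ∧
      (∀ i, g (t i) = s i) ∧
      Submodule.map (g : V →ₗ[ℂ] V) (Submodule.span ℂ (Set.range t))
        = Submodule.span ℂ (Set.range s) :=
  stmt_0_general V V₁ V₂ hcompl N m s t u v v' hu hv hv' hs ht huli hu0 hvli hv'li
end

section
/- Evaluation of monomial systems at coordinate points: for the family in Gr_N(V) given by Δ' = Span(u₁,…,u_n, u_{n+1}+z_{n+1}^δ,…,u_m+z_m^δ, z_{m+1}^δ,…,z_N^δ), where u₁,…,u_m ∈ V₁ = H⁰ of forms not involving z_n,…,z_N, and ∩_{i=1}^n(u_i = 0) ∩ ℙ^{n-1} = ∅ (with ℙ^{n-1} = {z_n = ⋯ = z_N = 0}), the common zero locus Int(Δ') in ℙ^N is disjoint from the hyperplane {z_n = 0}. -/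
open MvPolynomial

/-- point-avoidance in Claim "action".  For
`Δ' = Span(u₁,…,u_n, u_{n+1}+z_{n+1}^δ,…,u_m+z_m^δ, z_{m+1}^δ,…,z_N^δ)` with
`uᵢ` homogeneous of degree `δ` involving only the variables `z₀,…,z_{n-1}`,
if `⋂_{i=1}^n (uᵢ = 0) ∩ ℙ^{n-1} = ∅` (where `ℙ^{n-1} = {z_n = ⋯ = z_N = 0}`),
then the common zero locus `Int(Δ')` is disjoint from the hyperplane
`{z_n = 0}`: every nonzero `z` with `z_n = 0` fails to annihilate some element
of `Δ'`. -/
theorem stmt_19 (n m N δ : ℕ) (hn : 1 ≤ n) (hnm : n ≤ m) (hmN : m ≤ N) (hδ : 1 ≤ δ)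
    (u : Fin m → MvPolynomial (Fin (N + 1)) ℂ)
    (hhom : ∀ i, (u i).IsHomogeneous δ)
    (hvars : ∀ i : Fin m, ∀ d ∈ (u i).support, ∀ j : Fin (N + 1), n ≤ (j : ℕ) → d j = 0)
    (hempty : ∀ w : Fin (N + 1) → ℂ, w ≠ 0 →
        (∀ j : Fin (N + 1), n ≤ (j : ℕ) → w j = 0) →
        ∃ i : Fin m, (i : ℕ) < n ∧ eval w (u i) ≠ 0)
    (Δ' : Submodule ℂ (MvPolynomial (Fin (N + 1)) ℂ))
    (hΔ' : Δ' = Submodule.span ℂ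
        ({Q | ∃ i : Fin m, (i : ℕ) < n ∧ Q = u i} ∪
         {Q | ∃ i : Fin m, n ≤ (i : ℕ) ∧
            Q = u i + X (Fin.castLE (Nat.succ_le_succ hmN) i.succ) ^ δ} ∪
         {Q | ∃ j : Fin (N + 1), m < (j : ℕ) ∧ Q = X j ^ δ})) :
    ∀ z : Fin (N + 1) → ℂ, z ≠ 0 →
      z (⟨n, by omega⟩ : Fin (N + 1)) = 0 →
      ∃ Q ∈ Δ', eval z Q ≠ 0 := by
  subst hΔ'
  intro z hz hzn
  classical
  have key : ∀ i : Fin m, ∀ f g : Fin (N+1) → ℂ,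
      (∀ j : Fin (N+1), (j : ℕ) < n → f j = g j) → eval f (u i) = eval g (u i) := by
    intro i f g hfg
    rw [eval_eq, eval_eq]
    apply Finset.sum_congr rfl
    intro d hd
    congr 1
    apply Finset.prod_congr rfl
    intro j hj
    have hdj : d j ≠ 0 := Finsupp.mem_support_iff.mp hj
    have hjlt : (j : ℕ) < n := by
      by_contra h
      exact hdj (hvars i d hd j (le_of_not_gt h))
    rw [hfg j hjlt]
  by_cases hw : ∃ j : Fin (N+1), (j : ℕ) < n ∧ z j ≠ 0
  · set w : Fin (N+1) → ℂ := fun j => if (j : ℕ) < n then z j else 0 with hwdef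
    have hwne : w ≠ 0 := by
      obtain ⟨j, hj, hzj⟩ := hw
      intro h
      apply hzj
      have := congrFun h j
      simpa [hwdef, hj] using this
    obtain ⟨i, hi, hne⟩ := hempty w hwne (by
      intro j hj; simp [hwdef, Nat.not_lt.mpr hj])
    refine ⟨u i, Submodule.subset_span (Or.inl (Or.inl ⟨i, hi, rfl⟩)), ?_⟩
    rw [key i z w (fun j hj => by simp [hwdef, hj])]
    exact hne
  · push_neg at hw
    have hz0 : ∀ j : Fin (N+1), (j : ℕ) ≤ n → z j = 0 := by
      intro j hj
      rcases lt_or_eq_of_le hj with h | h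
      · exact hw j h
      · have hje : j = (⟨n, by omega⟩ : Fin (N+1)) := Fin.ext h
        rw [hje]; exact hzn
    obtain ⟨j, hjz⟩ : ∃ j : Fin (N+1), z j ≠ 0 := by
      by_contra h; push_neg at h; exact hz (funext h)
    have hjn : n < (j : ℕ) := by
      by_contra h; exact hjz (hz0 j (le_of_not_gt h))
    have hevalu : ∀ i : Fin m, eval z (u i) = 0 := by
      intro i
      rw [eval_eq]
      apply Finset.sum_eq_zero
      intro d hd
      have hcoeff : coeff d (u i) ≠ 0 := mem_support_iff.mp hd
      have hdeg := hhom i hcoeff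
      have hdne : d ≠ 0 := by
        intro h0
        rw [h0] at hdeg
        simp at hdeg
        omega
      obtain ⟨j', hj'⟩ : ∃ j', d j' ≠ 0 := by
        by_contra h; push_neg at h
        exact hdne (Finsupp.ext h)
      have hj's : j' ∈ d.support := Finsupp.mem_support_iff.mpr hj'
      have hj'lt : (j' : ℕ) < n := by
        by_contra h
        exact hj' (hvars i d hd j' (le_of_not_gt h))
      have : ∏ k ∈ d.support, z k ^ d k = 0 := by
        apply Finset.prod_eq_zero hj's
        rw [hz0 j' (le_of_lt hj'lt)]
        exact zero_pow hj'
      rw [this, mul_zero]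
    by_cases hjm : m < (j : ℕ)
    · refine ⟨X j ^ δ, Submodule.subset_span (Or.inr ⟨j, hjm, rfl⟩), ?_⟩
      simpa using pow_ne_zero δ hjz
    · push_neg at hjm
      set i : Fin m := ⟨(j : ℕ) - 1, by omega⟩ with hidef
      have hcast : Fin.castLE (Nat.succ_le_succ hmN) i.succ = j := by
        apply Fin.ext
        simp [hidef]
        omega
      refine ⟨u i + X (Fin.castLE (Nat.succ_le_succ hmN) i.succ) ^ δ,
        Submodule.subset_span (Or.inl (Or.inr ⟨i, by simp [hidef]; omega, rfl⟩)), ?_⟩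
      rw [hcast]
      rw [map_add, hevalu i, zero_add]
      simpa using pow_ne_zero δ hjz
end
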